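/- If problem (P2-R) admits an optimal solution, then it admits an optimal solution (t*, W̄_1, …, W̄_K, W̄_S) in which every matrix W̄_k (k = 1, …, K) has rank at most 1; i.e., W̄_k = w_k w_kᴴ for some vector w_k ∈ ℂ^N. -/

import Mathlib

/-! Replace each `W_k` of an optimal solution by the rank-one matrix
`W̄_k = W_k h_k h_kᴴ W_k / (h_kᴴ W_k h_k)` and move the remainders `W_k - W̄_k` into `W_S`.
Cauchy–Schwarz for the semi-inner product `(x, y) ↦ xᴴ W_k y` makes each remainder positive
semidefinite, so user `k` keeps its gain `h_kᴴ W̄_k h_k = h_kᴴ W_k h_k` while every interference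
term `h_jᴴ W̄_k h_j` can only drop. The total covariance `R`, and with it `B(t, R)`, the power
budget and the objective `t`, is unchanged. -/

open Matrix ComplexOrder

/-- The 2×2 matrix `B(t, R)` from problem (P2-R). -/
noncomputable def Bmat {N : ℕ} (A1 A2 A3 : Matrix (Fin N) (Fin N) ℂ)
    (t : ℝ) (R : Matrix (Fin N) (Fin N) ℂ) : Matrix (Fin 2) (Fin 2) ℂ :=
  !![(A1 * R).trace - (t : ℂ), (A2 * R).trace;
     (A2ᴴ * R).trace, (A3 * R).trace]

/-- Feasibility of a tuple `(t, W_1, …, W_K, W_S)` for problem (P2-R). -/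
def Feasible {N K : ℕ} (A1 A2 A3 : Matrix (Fin N) (Fin N) ℂ)
    (h : Fin K → Fin N → ℂ) (γ σsq : Fin K → ℝ) (P : ℝ)
    (t : ℝ) (W : Fin K → Matrix (Fin N) (Fin N) ℂ)
    (WS : Matrix (Fin N) (Fin N) ℂ) : Prop :=
  (∀ k, (W k).PosSemidef) ∧ WS.PosSemidef ∧
  (Bmat A1 A2 A3 t ((∑ k, W k) + WS)).PosSemidef ∧
  (∀ k, ((γ k * σsq k : ℝ) : ℂ) ≤
      star (h k) ⬝ᵥ ((W k - ((γ k : ℝ) : ℂ) • ∑ i ∈ Finset.univ.erase k, W i) *ᵥ h k)) ∧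
  ((∑ k, W k) + WS).trace ≤ (P : ℂ)

/-- Optimality of a tuple for problem (P2-R). -/
def Optimal {N K : ℕ} (A1 A2 A3 : Matrix (Fin N) (Fin N) ℂ)
    (h : Fin K → Fin N → ℂ) (γ σsq : Fin K → ℝ) (P : ℝ)
    (t : ℝ) (W : Fin K → Matrix (Fin N) (Fin N) ℂ)
    (WS : Matrix (Fin N) (Fin N) ℂ) : Prop :=
  Feasible A1 A2 A3 h γ σsq P t W WS ∧
  ∀ (t' : ℝ) (W' : Fin K → Matrix (Fin N) (Fin N) ℂ) (WS' : Matrix (Fin N) (Fin N) ℂ),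
    Feasible A1 A2 A3 h γ σsq P t' W' WS' → t' ≤ t

namespace Matrix

variable {n 𝕜 : Type*} [Fintype n] [RCLike 𝕜] {W : Matrix n n 𝕜}

theorem PosSemidef.norm_dotProduct_mulVec_sq_le (hW : W.PosSemidef) (x y : n → 𝕜) :
    ‖star x ⬝ᵥ (W *ᵥ y)‖ ^ 2 ≤
      RCLike.re (star x ⬝ᵥ (W *ᵥ x)) * RCLike.re (star y ⬝ᵥ (W *ᵥ y)) := by
  let := W.toSeminormedAddCommGroup hW
  let := W.toInnerProductSpace hW
  have hinner : ∀ u v : n → 𝕜, inner 𝕜 u v = star u ⬝ᵥ (W *ᵥ v) := fun u v =>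
    dotProduct_comm _ _
  have := inner_mul_inner_self_le (𝕜 := 𝕜) x y
  rwa [← norm_inner_symm x y, ← sq, hinner, hinner, hinner] at this

theorem PosSemidef.exists_ofReal_eq_dotProduct_mulVec (hW : W.PosSemidef) (x : n → 𝕜) :
    ∃ a : ℝ, 0 ≤ a ∧ (a : 𝕜) = star x ⬝ᵥ (W *ᵥ x) :=
  RCLike.nonneg_iff_exists_ofReal.mp (hW.dotProduct_mulVec_nonneg x)

theorem IsHermitian.star_mulVec_dotProduct (hW : W.IsHermitian) (x y : n → 𝕜) :
    star (W *ᵥ x) ⬝ᵥ y = star x ⬝ᵥ (W *ᵥ y) := by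
  rw [star_mulVec, hW.eq, ← dotProduct_mulVec]

theorem IsHermitian.star_dotProduct_mulVec (hW : W.IsHermitian) (x y : n → 𝕜) :
    star (star x ⬝ᵥ (W *ᵥ y)) = star y ⬝ᵥ (W *ᵥ x) := by
  rw [star_dotProduct, hW.star_mulVec_dotProduct, star_star]

/-- When `hᴴ W h = 0`, the convention `0⁻¹ = 0` makes this `0`, and the lemmas below still hold. -/
noncomputable def rankOneReduction (W : Matrix n n 𝕜) (h : n → 𝕜) : Matrix n n 𝕜 :=
  (star h ⬝ᵥ (W *ᵥ h))⁻¹ • vecMulVec (W *ᵥ h) (star (W *ᵥ h))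

theorem rankOneReduction_mulVec (W : Matrix n n 𝕜) (h x : n → 𝕜) :
    rankOneReduction W h *ᵥ x = ((star h ⬝ᵥ (W *ᵥ h))⁻¹ * (star (W *ᵥ h) ⬝ᵥ x)) • (W *ᵥ h) := by
  rw [rankOneReduction, smul_mulVec, vecMulVec_mulVec, op_smul_eq_smul, smul_smul]

theorem IsHermitian.dotProduct_rankOneReduction_mulVec (hW : W.IsHermitian) (h : n → 𝕜) :
    star h ⬝ᵥ (rankOneReduction W h *ᵥ h) = star h ⬝ᵥ (W *ᵥ h) := by
  rw [rankOneReduction_mulVec, dotProduct_smul, hW.star_mulVec_dotProduct, smul_eq_mul]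
  by_cases hc : star h ⬝ᵥ (W *ᵥ h) = 0
  · simp [hc]
  · field_simp

theorem PosSemidef.rankOneReduction_eq_vecMulVec (hW : W.PosSemidef) (h : n → 𝕜) :
    ∃ w, rankOneReduction W h = vecMulVec w (star w) := by
  obtain ⟨c, hc, hch⟩ := hW.exists_ofReal_eq_dotProduct_mulVec h
  refine ⟨(√c)⁻¹ • (W *ᵥ h), ?_⟩
  rw [star_smul, star_trivial, smul_vecMulVec, vecMulVec_smul, smul_smul, ← mul_inv,
    Real.mul_self_sqrt hc, RCLike.real_smul_eq_coe_smul (K := 𝕜), RCLike.ofReal_inv, hch,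
    rankOneReduction]

theorem PosSemidef.posSemidef_rankOneReduction (hW : W.PosSemidef) (h : n → 𝕜) :
    (rankOneReduction W h).PosSemidef := by
  obtain ⟨w, hw⟩ := hW.rankOneReduction_eq_vecMulVec h
  exact hw ▸ posSemidef_vecMulVec_self_star w

theorem PosSemidef.posSemidef_sub_rankOneReduction (hW : W.PosSemidef) (h : n → 𝕜) :
    (W - rankOneReduction W h).PosSemidef := by
  refine .of_dotProduct_mulVec_nonneg (hW.1.sub (hW.posSemidef_rankOneReduction h).1) fun x => ?_
  rw [sub_mulVec, dotProduct_sub, rankOneReduction_mulVec, dotProduct_smul,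
    hW.isHermitian.star_mulVec_dotProduct, ← hW.isHermitian.star_dotProduct_mulVec x h,
    smul_eq_mul, mul_assoc, RCLike.star_def, RCLike.conj_mul, sub_nonneg]
  obtain ⟨a, ha, hxa⟩ := hW.exists_ofReal_eq_dotProduct_mulVec x
  obtain ⟨c, hc, hhc⟩ := hW.exists_ofReal_eq_dotProduct_mulVec h
  have hcs := hW.norm_dotProduct_mulVec_sq_le x h
  rw [← hxa, ← hhc, RCLike.ofReal_re, RCLike.ofReal_re] at hcs
  rw [← hxa, ← hhc, ← RCLike.ofReal_pow, ← RCLike.ofReal_inv, ← RCLike.ofReal_mul,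
    RCLike.ofReal_le_ofReal]
  rcases hc.eq_or_lt with rfl | hc
  · simpa using ha
  · rw [inv_mul_le_iff₀ hc]
    linarith

theorem PosSemidef.dotProduct_rankOneReduction_mulVec_le (hW : W.PosSemidef) (h x : n → 𝕜) :
    star x ⬝ᵥ (rankOneReduction W h *ᵥ x) ≤ star x ⬝ᵥ (W *ᵥ x) := by
  have := (hW.posSemidef_sub_rankOneReduction h).dotProduct_mulVec_nonneg x
  rwa [sub_mulVec, dotProduct_sub, sub_nonneg] at this

theorem dotProduct_sub_smul_sum_mulVec {α ι : Type*} [CommRing α] (x y : n → α)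
    (A : Matrix n n α) (c : α) (s : Finset ι) (B : ι → Matrix n n α) :
    x ⬝ᵥ ((A - c • ∑ i ∈ s, B i) *ᵥ y) = x ⬝ᵥ (A *ᵥ y) - c * ∑ i ∈ s, x ⬝ᵥ (B i *ᵥ y) := by
  rw [sub_mulVec, smul_mulVec, sum_mulVec, dotProduct_sub, dotProduct_smul, dotProduct_sum,
    smul_eq_mul]

end Matrix

theorem Feasible.feasible_rankOneReduction {N K : ℕ} {A1 A2 A3 : Matrix (Fin N) (Fin N) ℂ}
    {h : Fin K → Fin N → ℂ} {γ σsq : Fin K → ℝ} {P t : ℝ}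
    {W : Fin K → Matrix (Fin N) (Fin N) ℂ} {WS : Matrix (Fin N) (Fin N) ℂ}
    (hf : Feasible A1 A2 A3 h γ σsq P t W WS) (hγ : ∀ k, 0 ≤ γ k) :
    Feasible A1 A2 A3 h γ σsq P t (fun k => rankOneReduction (W k) (h k))
      (WS + ∑ k, (W k - rankOneReduction (W k) (h k))) := by
  obtain ⟨hW, hWS, hB, hSINR, hpower⟩ := hf
  have hR : ∑ k, rankOneReduction (W k) (h k) + (WS + ∑ k, (W k - rankOneReduction (W k) (h k)))
      = ∑ k, W k + WS := by
    rw [Finset.sum_sub_distrib]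
    abel
  refine ⟨fun k => (hW k).posSemidef_rankOneReduction (h k),
    hWS.add (posSemidef_sum _ fun k _ => (hW k).posSemidef_sub_rankOneReduction (h k)),
    hR ▸ hB, fun k => ?_, hR ▸ hpower⟩
  have hSINRk := hSINR k
  rw [dotProduct_sub_smul_sum_mulVec] at hSINRk ⊢
  refine hSINRk.trans (sub_le_sub ?_ ?_)
  · rw [(hW k).isHermitian.dotProduct_rankOneReduction_mulVec]
  · exact mul_le_mul_of_nonneg_left
      (Finset.sum_le_sum fun i _ => (hW i).dotProduct_rankOneReduction_mulVec_le (h i) (h k))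
      (Complex.zero_le_real.mpr (hγ k))

theorem stmt1_general {N K : ℕ} (A1 A2 A3 : Matrix (Fin N) (Fin N) ℂ)
    (h : Fin K → Fin N → ℂ) (γ σsq : Fin K → ℝ)
    (hγ : ∀ k, 0 < γ k) (P : ℝ)
    (hex : ∃ (t : ℝ) (W : Fin K → Matrix (Fin N) (Fin N) ℂ) (WS : Matrix (Fin N) (Fin N) ℂ),
      Optimal A1 A2 A3 h γ σsq P t W WS) :
    ∃ (t : ℝ) (Wbar : Fin K → Matrix (Fin N) (Fin N) ℂ) (WbarS : Matrix (Fin N) (Fin N) ℂ),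
      Optimal A1 A2 A3 h γ σsq P t Wbar WbarS ∧
      ∀ k, (Wbar k).rank ≤ 1 ∧ ∃ w : Fin N → ℂ, Wbar k = vecMulVec w (star w) := by
  obtain ⟨t, W, WS, hf, hbest⟩ := hex
  refine ⟨t, _, _, ⟨hf.feasible_rankOneReduction fun k => (hγ k).le, hbest⟩, fun k => ?_⟩
  obtain ⟨w, hw⟩ := (hf.1 k).rankOneReduction_eq_vecMulVec (h k)
  exact ⟨hw ▸ rank_vecMulVec_le w (star w), w, hw⟩

/-- If problem (P2-R) admits an optimal solution, then it admits an optimal solution in which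
every communication covariance matrix `W̄_k` has rank at most 1, i.e. `W̄_k = w_k w_kᴴ`
for some vector `w_k ∈ ℂ^N`. -/
theorem stmt1 {N K : ℕ} (A1 A2 A3 : Matrix (Fin N) (Fin N) ℂ)
    (hA1 : A1.IsHermitian) (hA3 : A3.IsHermitian)
    (h : Fin K → Fin N → ℂ) (γ σsq : Fin K → ℝ)
    (hγ : ∀ k, 0 < γ k) (hσ : ∀ k, 0 < σsq k) (P : ℝ) (hP : 0 < P)
    (hex : ∃ (t : ℝ) (W : Fin K → Matrix (Fin N) (Fin N) ℂ) (WS : Matrix (Fin N) (Fin N) ℂ),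
      Optimal A1 A2 A3 h γ σsq P t W WS) :
    ∃ (t : ℝ) (Wbar : Fin K → Matrix (Fin N) (Fin N) ℂ) (WbarS : Matrix (Fin N) (Fin N) ℂ),
      Optimal A1 A2 A3 h γ σsq P t Wbar WbarS ∧
      ∀ k, (Wbar k).rank ≤ 1 ∧ ∃ w : Fin N → ℂ, Wbar k = vecMulVec w (star w) :=
  stmt1_general A1 A2 A3 h γ σsq hγ P hex
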